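/- arXiv:1202.0219 — 2 statements merged into one kernel-verified Lean document; each statement's English description precedes it below -/
import Mathlib

section
/- Summation formula: 𝔊_{n,q}^{(α)}(x,y) = ∑_{k=0}^n [n choose k]_q q^{(n-k)(n-k-1)/2} 𝔊_{k,q}^{(α)}(x,0) y^{n-k}, and also 𝔊_{n,q}^{(α)}(x,y) = ∑_{k=0}^n [n choose k]_q 𝔊_{k,q}^{(α)}(0,y) x^{n-k}. -/
open PowerSeries Finset

/-- The `q`-integer `[n]_q = 1 + q + ⋯ + q^(n-1)`. -/
noncomputable def qInt (q : ℂ) (n : ℕ) : ℂ := ∑ i ∈ Finset.range n, q ^ i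

/-- The `q`-factorial `[n]_q!`. -/
noncomputable def qFact (q : ℂ) : ℕ → ℂ
  | 0 => 1
  | n + 1 => qFact q n * qInt q (n + 1)

/-- The Gaussian (`q`-binomial) coefficient. -/
noncomputable def qBinom (q : ℂ) (n k : ℕ) : ℂ := qFact q n / (qFact q k * qFact q (n - k))

/-- The formal power series `e_q(tx) = ∑ x^n t^n/[n]_q!`. -/
noncomputable def qExpSeries (q : ℂ) (x : ℂ) : PowerSeries ℂ :=
  PowerSeries.mk fun n => x ^ n / qFact q n

/-- The formal power series `E_q(ty) = ∑ q^(n(n-1)/2) y^n t^n/[n]_q!`. -/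
noncomputable def qExpSeries' (q : ℂ) (y : ℂ) : PowerSeries ℂ :=
  PowerSeries.mk fun n => q ^ (n * (n - 1) / 2) * y ^ n / qFact q n

/-- Generating series `(2t/(e_q(t)+1))^α e_q(tx) E_q(ty)` of the `q`-Genocchi polynomials. -/
noncomputable def qGenocchiSeries (q : ℂ) (α : ℕ) (x y : ℂ) : PowerSeries ℂ :=
  (PowerSeries.C 2 * PowerSeries.X * (qExpSeries q 1 + 1)⁻¹) ^ α *
    qExpSeries q x * qExpSeries' q y

/-- The `q`-Genocchi polynomial `𝔊_{n,q}^{(α)}(x,y)`. -/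
noncomputable def qGenocchi (q : ℂ) (α : ℕ) (x y : ℂ) (n : ℕ) : ℂ :=
  qFact q n * PowerSeries.coeff n (qGenocchiSeries q α x y)

/-- The `q`-Bernoulli polynomial `𝔅_{n,q}(x,y)`, defined via
`(t/(e_q(t)-1)) e_q(tx) E_q(ty) = ∑ 𝔅_{n,q}(x,y) t^n/[n]_q!`
(note `t/(e_q(t)-1)` is the inverse of the series `∑ t^n/[n+1]_q!`). -/
noncomputable def qBernoulli (q : ℂ) (x y : ℂ) (n : ℕ) : ℂ :=
  qFact q n * PowerSeries.coeff n
    ((PowerSeries.mk fun k => (qFact q (k + 1))⁻¹)⁻¹ * qExpSeries q x * qExpSeries' q y)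

/-- The Gauss polynomial `(x+y)_q^n = ∑_k [n k]_q q^(k(k-1)/2) x^(n-k) y^k`. -/
noncomputable def qAddPow (q : ℂ) (x y : ℂ) (n : ℕ) : ℂ :=
  ∑ k ∈ Finset.range (n + 1), qBinom q n k * q ^ (k * (k - 1) / 2) * x ^ (n - k) * y ^ k

/-! Multiplying a series by `E_q(ty)` (resp. `e_q(tx)`) is a `q`-binomial convolution of its
`[n]_q!`-normalised coefficients, and the generating series at `y = 0` (resp. `x = 0`) is the
full one with that exponential factor removed. -/

noncomputable def qEGF (q : ℂ) (a : ℕ → ℂ) : PowerSeries ℂ :=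
  PowerSeries.mk fun m => a m / qFact q m

lemma qFact_ne_zero_of_le {q : ℂ} {k n : ℕ} (hkn : k ≤ n) (hn : qFact q n ≠ 0) :
    qFact q k ≠ 0 := by
  induction n, hkn using Nat.le_induction with
  | base => exact hn
  | succ m _ ih => exact ih (left_ne_zero_of_mul (by rwa [qFact] at hn))

/- Division by zero being zero, this holds for every `q`: if `[n]_q! = 0` both sides vanish, and
otherwise every `[k]_q!` with `k ≤ n` divides it and is nonzero. -/
lemma qFact_mul_coeff_mul_qEGF (q : ℂ) (f : PowerSeries ℂ) (a : ℕ → ℂ) (n : ℕ) :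
    qFact q n * coeff n (f * qEGF q a) =
      ∑ k ∈ range (n + 1), qBinom q n k * (qFact q k * coeff k f) * a (n - k) := by
  rw [coeff_mul, Nat.sum_antidiagonal_eq_sum_range_succ_mk, mul_sum]
  by_cases hn : qFact q n = 0
  · simp [hn, qBinom]
  refine sum_congr rfl fun k hk => ?_
  have hkn : k ≤ n := Nat.lt_succ_iff.mp (mem_range.mp hk)
  have hk : qFact q k ≠ 0 := qFact_ne_zero_of_le hkn hn
  have hnk : qFact q (n - k) ≠ 0 := qFact_ne_zero_of_le (Nat.sub_le n k) hn
  simp only [qEGF, coeff_mk, qBinom]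
  field_simp

lemma qExpSeries_zero (q : ℂ) : qExpSeries q 0 = 1 := by
  ext (_ | n) <;> simp [qExpSeries, qFact, coeff_one]

lemma qExpSeries'_zero (q : ℂ) : qExpSeries' q 0 = 1 := by
  ext (_ | n) <;> simp [qExpSeries', qFact, coeff_one]

lemma qGenocchiSeries_eq_mul_qExpSeries' (q : ℂ) (α : ℕ) (x y : ℂ) :
    qGenocchiSeries q α x y = qGenocchiSeries q α x 0 * qExpSeries' q y := by
  rw [qGenocchiSeries, qGenocchiSeries, qExpSeries'_zero, mul_one]

lemma qGenocchiSeries_eq_mul_qExpSeries (q : ℂ) (α : ℕ) (x y : ℂ) :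
    qGenocchiSeries q α x y = qGenocchiSeries q α 0 y * qExpSeries q x := by
  rw [qGenocchiSeries, qGenocchiSeries, qExpSeries_zero, mul_one, mul_right_comm]

theorem qGenocchi_sum_formulas_general (q : ℂ)
    (α n : ℕ) (x y : ℂ) :
    qGenocchi q α x y n =
      (∑ k ∈ Finset.range (n + 1),
        qBinom q n k * q ^ ((n - k) * (n - k - 1) / 2) * qGenocchi q α x 0 k * y ^ (n - k)) ∧
    qGenocchi q α x y n =
      ∑ k ∈ Finset.range (n + 1),
        qBinom q n k * qGenocchi q α 0 y k * x ^ (n - k) := by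
  constructor
  · rw [qGenocchi, qGenocchiSeries_eq_mul_qExpSeries', qExpSeries',
      ← qEGF, qFact_mul_coeff_mul_qEGF]
    exact sum_congr rfl fun k _ => by rw [qGenocchi]; ring
  · rw [qGenocchi, qGenocchiSeries_eq_mul_qExpSeries, qExpSeries, ← qEGF,
      qFact_mul_coeff_mul_qEGF]
    rfl

/-- Summation formulas for the `q`-Genocchi polynomials of order `α`. -/
theorem qGenocchi_sum_formulas (q : ℂ) (hq : ∀ n : ℕ, qInt q (n + 1) ≠ 0)
    (α n : ℕ) (x y : ℂ) :
    qGenocchi q α x y n =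
      (∑ k ∈ Finset.range (n + 1),
        qBinom q n k * q ^ ((n - k) * (n - k - 1) / 2) * qGenocchi q α x 0 k * y ^ (n - k)) ∧
    qGenocchi q α x y n =
      ∑ k ∈ Finset.range (n + 1),
        qBinom q n k * qGenocchi q α 0 y k * x ^ (n - k) :=
  qGenocchi_sum_formulas_general q α n x y
end

section
/- Difference equation: 𝔊_{n,q}^{(α)}(1,y) + 𝔊_{n,q}^{(α)}(0,y) = 2[n]_q 𝔊_{n-1,q}^{(α-1)}(0,y) for n ≥ 1 and α ≥ 1. -/
open PowerSeries Finset

/-! Since `e_q(0) = 1`, the two generating series add up to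
`(2t/(e_q(t)+1))^α (e_q(t) + 1) E_q(ty) = 2t · (2t/(e_q(t)+1))^(α-1) E_q(ty)`,
where `e_q(t) + 1` is invertible because its constant term is `2`.
Comparing coefficients of `t^n` and using `[n]_q! = [n]_q [n-1]_q!` gives the identity. -/

lemma coeff_succ_C_mul_X_mul {R : Type*} [CommSemiring R] (a : R) (f : PowerSeries R) (n : ℕ) :
    coeff (n + 1) (C a * X * f) = a * coeff n f := by
  rw [mul_comm (C a) X, mul_assoc, coeff_succ_X_mul, coeff_C_mul]

lemma constantCoeff_qExpSeries (q x : ℂ) : constantCoeff (qExpSeries q x) = 1 := by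
  simp [qExpSeries, qFact]

lemma qGenocchiSeries_succ_one_add_zero (q : ℂ) (α : ℕ) (y : ℂ) :
    qGenocchiSeries q (α + 1) 1 y + qGenocchiSeries q (α + 1) 0 y =
      C 2 * X * qGenocchiSeries q α 0 y := by
  have hunit : (qExpSeries q 1 + 1)⁻¹ * (qExpSeries q 1 + 1) = 1 := by
    apply PowerSeries.inv_mul_cancel
    rw [map_add, constantCoeff_qExpSeries, map_one]
    norm_num
  simp only [qGenocchiSeries, qExpSeries_zero, pow_succ]
  linear_combination
    (C 2 * X * (qExpSeries q 1 + 1)⁻¹) ^ α * C 2 * X * qExpSeries' q y * hunit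

theorem qGenocchi_difference_eq_general (q : ℂ)
    (α n : ℕ) (hα : 1 ≤ α) (hn : 1 ≤ n) (y : ℂ) :
    qGenocchi q α 1 y n + qGenocchi q α 0 y n =
      2 * qInt q n * qGenocchi q (α - 1) 0 y (n - 1) := by
  obtain ⟨β, rfl⟩ := Nat.exists_eq_add_of_le' hα
  obtain ⟨m, rfl⟩ := Nat.exists_eq_add_of_le' hn
  simp only [qGenocchi, Nat.add_sub_cancel, ← mul_add, ← map_add,
    qGenocchiSeries_succ_one_add_zero, coeff_succ_C_mul_X_mul, qFact]
  ring

/-- Difference equation: `𝔊_{n,q}^{(α)}(1,y) + 𝔊_{n,q}^{(α)}(0,y) = 2[n]_q 𝔊_{n-1,q}^{(α-1)}(0,y)`. -/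
theorem qGenocchi_difference_eq (q : ℂ) (hq : ∀ n : ℕ, qInt q (n + 1) ≠ 0)
    (α n : ℕ) (hα : 1 ≤ α) (hn : 1 ≤ n) (y : ℂ) :
    qGenocchi q α 1 y n + qGenocchi q α 0 y n =
      2 * qInt q n * qGenocchi q (α - 1) 0 y (n - 1) :=
  qGenocchi_difference_eq_general q α n hα hn y
end
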